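/- Suppose x ∈ 𝓞_K satisfies |N(x)| = p for a prime number p, and x divides ζ − ξ in 𝓞_K for some integer ξ. Then for every polynomial Φ with integer coefficients, x divides Φ(ζ) in 𝓞_K if and only if p divides Φ(ξ) in ℤ. -/

import Mathlib

/-!
Since `x ∣ ζ - ξ`, every integer polynomial satisfies `Φ(ζ) ≡ Φ(ξ) (mod x)`, so the question is
which rational integers `n` are divisible by `x`. Taking norms, `x ∣ n` forces `±p = N(x) ∣ n ^ d`,
hence `p ∣ n`; conversely `x` divides its own norm `±p`.
-/

open NumberField Polynomial

noncomputable instance (n : ℕ+) : NumberField (CyclotomicField n ℚ) :=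
  @IsCyclotomicExtension.numberField {(n : ℕ)} ℚ (CyclotomicField n ℚ) _ _ (CyclotomicField.algebra _ _) _ _
    inferInstance

namespace Polynomial

section

variable {R A : Type*} [CommRing R] [CommRing A] [Algebra R A]

theorem sub_dvd_aeval_sub (a b : A) (Φ : R[X]) : a - b ∣ aeval a Φ - aeval b Φ := by
  simpa only [aeval_def, eval₂_eq_eval_map] using sub_dvd_eval_sub a b (Φ.map (algebraMap R A))

theorem dvd_aeval_iff_of_dvd_sub {x a b : A} (h : x ∣ a - b) (Φ : R[X]) :
    x ∣ aeval a Φ ↔ x ∣ aeval b Φ :=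
  dvd_iff_dvd_of_dvd_sub (h.trans (sub_dvd_aeval_sub a b Φ))

end

theorem aeval_intCast {A : Type*} [CommRing A] (Φ : ℤ[X]) (n : ℤ) :
    aeval (n : A) Φ = ((Φ.eval n : ℤ) : A) := by
  simpa only [algebraMap_int_eq, eq_intCast] using
    aeval_algebraMap_apply_eq_algebraMap_eval (A := A) n Φ

end Polynomial

namespace NumberField.RingOfIntegers

variable {K : Type*} [Field K] [NumberField K]

theorem dvd_intCast_norm (x : 𝓞 K) : x ∣ ((Algebra.norm ℤ x : ℤ) : 𝓞 K) := by
  simpa only [Algebra.intNorm_eq_norm, algebraMap_int_eq, eq_intCast] using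
    Algebra.dvd_algebraMap_intNorm_self ℤ (𝓞 K) x

theorem dvd_intCast_iff_of_natAbs_norm_eq_prime {x : 𝓞 K} {p : ℕ} (hp : p.Prime)
    (hx : (Algebra.norm ℤ x).natAbs = p) (n : ℤ) : x ∣ (n : 𝓞 K) ↔ (p : ℤ) ∣ n := by
  constructor
  · intro h
    have hnorm : Algebra.norm ℤ x ∣ n ^ Module.finrank ℤ (𝓞 K) := by
      simpa only [← eq_intCast (algebraMap ℤ (𝓞 K)), Algebra.norm_algebraMap] using
        map_dvd (Algebra.norm ℤ) h
    exact Int.Prime.dvd_pow' hp (hx ▸ Int.natAbs_dvd.mpr hnorm)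
  · intro h
    have hnorm : Algebra.norm ℤ x ∣ n := Int.natAbs_dvd.mp (hx ▸ h)
    exact (dvd_intCast_norm x).trans (Int.cast_dvd_cast _ _ hnorm)

end NumberField.RingOfIntegers

open NumberField.RingOfIntegers in
theorem dvd_aeval_iff_dvd_eval_general (l : ℕ+)
    (ζ : 𝓞 (CyclotomicField l ℚ))
    (p : ℕ) (hp : p.Prime)
    (x : 𝓞 (CyclotomicField l ℚ))
    (hx : (Algebra.norm ℤ x).natAbs = p)
    (ξ : ℤ) (hdvd : x ∣ ζ - (ξ : 𝓞 (CyclotomicField l ℚ))) :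
    ∀ Φ : ℤ[X], x ∣ Polynomial.aeval ζ Φ ↔ (p : ℤ) ∣ Φ.eval ξ := by
  intro Φ
  rw [dvd_aeval_iff_of_dvd_sub hdvd, aeval_intCast,
    dvd_intCast_iff_of_natAbs_norm_eq_prime hp hx]

/-- Kummer's congruence criterion: if `x` has prime norm `p` and divides `ζ - ξ`, then for any
integer polynomial `Φ`, `x` divides `Φ(ζ)` if and only if `p` divides `Φ(ξ)` in `ℤ`. -/
theorem dvd_aeval_iff_dvd_eval (l : ℕ+) (hl : (l : ℕ).Prime)
    (ζ : 𝓞 (CyclotomicField l ℚ)) (hζ : IsPrimitiveRoot ζ l)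
    (p : ℕ) (hp : p.Prime)
    (x : 𝓞 (CyclotomicField l ℚ))
    (hx : (Algebra.norm ℤ x).natAbs = p)
    (ξ : ℤ) (hdvd : x ∣ ζ - (ξ : 𝓞 (CyclotomicField l ℚ))) :
    ∀ Φ : ℤ[X], x ∣ Polynomial.aeval ζ Φ ↔ (p : ℤ) ∣ Φ.eval ξ :=
  dvd_aeval_iff_dvd_eval_general l ζ p hp x hx ξ hdvd
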